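/- Let q > 0, c > 0, and let n ≥ 2 be an even integer. Define g(λ) = λ − c√λ · cot(q√λ/2) on J_n = ((π(n−1))² q^{−2}, (πn)² q^{−2}). Then g is continuous and strictly increasing on J_n, g(λ) → (π(n−1))² q^{−2} as λ tends to the left endpoint of J_n, and g(λ) → +∞ as λ tends to the right endpoint. Consequently, for every μ > (π(n−1))² q^{−2} there exists a unique λ ∈ J_n with g(λ) = μ. -/

import Mathlib

/-!
Write `n = 2m` and `θ(λ) = (q√λ - π(n - 1)) / 2`, which increases from `0` to `π / 2` across
`J_n`. Since `cot (θ + mπ - π/2) = -tan θ`, the function becomes `g λ = λ + c √λ tan θ(λ)`: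
the identity plus a product of two nonnegative nondecreasing factors, hence strictly increasing.
At the left endpoint `tan θ = 0`, so `g` extends continuously with value `L`; at the right
endpoint `θ → π/2⁻` and `tan θ → +∞`. The intermediate value theorem and injectivity then give
exactly one root for every `μ > L`.
-/

open Set Filter Topology Real

theorem Real.cot_eq_neg_tan_add_pi_div_two_sub_int_mul (u : ℝ) (m : ℤ) :
    cot u = -tan (u + π / 2 - m * π) := by
  rw [tan_periodic.sub_int_mul_eq, cot_eq_cos_div_sin, tan_eq_sin_div_cos, sin_add_pi_div_two,
    cos_add_pi_div_two, div_neg, neg_neg]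

theorem existsUnique_mem_Ioo_eq_of_tendsto {f : ℝ → ℝ} {a b A μ : ℝ} (hab : a < b)
    (hcont : ContinuousOn f (Ioo a b)) (hmono : StrictMonoOn f (Ioo a b))
    (ha : Tendsto f (𝓝[Ioo a b] a) (𝓝 A)) (hb : Tendsto f (𝓝[Ioo a b] b) atTop) (hμ : A < μ) :
    ∃! x, x ∈ Ioo a b ∧ f x = μ := by
  have := left_nhdsWithin_Ioo_neBot hab
  have := right_nhdsWithin_Ioo_neBot hab
  obtain ⟨x₀, hfx₀, hx₀⟩ := ((ha.eventually_lt_const hμ).and self_mem_nhdsWithin).exists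
  obtain ⟨x₁, hfx₁, hx₁⟩ := ((hb.eventually_gt_atTop μ).and self_mem_nhdsWithin).exists
  obtain ⟨x, hx, hfx⟩ := hcont.surjOn_uIcc hx₀ hx₁ (Icc_subset_uIcc ⟨hfx₀.le, hfx₁.le⟩)
  exact ⟨x, ⟨hx, hfx⟩, fun y ⟨hy, hfy⟩ => hmono.injOn hy hx (hfy.trans hfx.symm)⟩

section AddMulTan

variable {θ : ℝ → ℝ} {c : ℝ} {s : Set ℝ}

theorem continuousOn_add_mul_tan (hθ : ContinuousOn θ s)
    (hmaps : MapsTo θ s (Ioo (-(π / 2)) (π / 2))) :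
    ContinuousOn (fun x => x + c * √x * tan (θ x)) s :=
  continuousOn_id.add <| (continuous_const.mul continuous_sqrt).continuousOn.mul <|
    continuousOn_tan_Ioo.comp hθ hmaps

theorem strictMonoOn_add_mul_tan (hc : 0 ≤ c) (hθ : MonotoneOn θ s)
    (hmaps : MapsTo θ s (Ico 0 (π / 2))) :
    StrictMonoOn (fun x => x + c * √x * tan (θ x)) s := by
  have htan : MonotoneOn (fun x => tan (θ x)) s := fun x hx y hy hxy =>
    strictMonoOn_tan.monotoneOn ⟨by linarith [pi_pos, (hmaps hx).1], (hmaps hx).2⟩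
      ⟨by linarith [pi_pos, (hmaps hy).1], (hmaps hy).2⟩ (hθ hx hy hxy)
  have hsqrt : MonotoneOn (fun x => c * √x) s := fun x _ y _ hxy =>
    mul_le_mul_of_nonneg_left (sqrt_le_sqrt hxy) hc
  exact strictMonoOn_id.add_monotone <| hsqrt.mul htan (fun x _ => by positivity)
    fun x hx => tan_nonneg_of_nonneg_of_le_pi_div_two (hmaps hx).1 (hmaps hx).2.le

theorem tendsto_add_mul_tan_nhds {a : ℝ} (hθ : ContinuousAt θ a) (hθa : θ a = 0) :
    Tendsto (fun x => x + c * √x * tan (θ x)) (𝓝 a) (𝓝 a) := by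
  have htan : ContinuousAt tan (θ a) := continuousAt_tan.2 (by simp [hθa])
  have hF : ContinuousAt (fun x => x + c * √x * tan (θ x)) a :=
    continuousAt_id.add ((continuous_const.mul continuous_sqrt).continuousAt.mul (htan.comp hθ))
  simpa [hθa] using hF.tendsto

theorem tendsto_add_mul_tan_atTop {b : ℝ} (hc : 0 < c) (hb : 0 < b)
    (hθ : ContinuousWithinAt θ s b) (hθb : θ b = π / 2) (hmaps : MapsTo θ s (Iio (π / 2))) :
    Tendsto (fun x => x + c * √x * tan (θ x)) (𝓝[s] b) atTop := by
  have hx : Tendsto (fun x : ℝ => x) (𝓝[s] b) (𝓝 b) :=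
    tendsto_nhdsWithin_of_tendsto_nhds tendsto_id
  have htan : Tendsto (fun x => tan (θ x)) (𝓝[s] b) atTop :=
    tendsto_tan_pi_div_two.comp <|
      tendsto_nhdsWithin_iff.2 ⟨hθb ▸ hθ, eventually_mem_nhdsWithin.mono hmaps⟩
  exact hx.add_atTop <| (hx.sqrt.const_mul c).pos_mul_atTop (by positivity) htan

end AddMulTan

theorem mul_sqrt_sq_div_sq {q a : ℝ} (hq : 0 < q) (ha : 0 ≤ a) : q * √(a ^ 2 / q ^ 2) = a := by
  rw [← div_pow, sqrt_sq (by positivity)]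
  field_simp

theorem mul_sqrt_mem_Ioo {q a b x : ℝ} (hq : 0 < q) (ha : 0 ≤ a) (hb : 0 ≤ b)
    (hx : x ∈ Ioo (a ^ 2 / q ^ 2) (b ^ 2 / q ^ 2)) : q * √x ∈ Ioo a b := by
  have hx₀ : 0 ≤ x := (by positivity : 0 ≤ a ^ 2 / q ^ 2).trans hx.1.le
  constructor
  · calc a = q * √(a ^ 2 / q ^ 2) := (mul_sqrt_sq_div_sq hq ha).symm
      _ < q * √x := mul_lt_mul_of_pos_left (sqrt_lt_sqrt (by positivity) hx.1) hq
  · calc q * √x < q * √(b ^ 2 / q ^ 2) := mul_lt_mul_of_pos_left (sqrt_lt_sqrt hx₀ hx.2) hq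
      _ = b := mul_sqrt_sq_div_sq hq hb

noncomputable def phase (q : ℝ) (n : ℕ) (x : ℝ) : ℝ := (q * √x - π * (n - 1)) / 2

theorem continuous_phase (q : ℝ) (n : ℕ) : Continuous (phase q n) := by
  unfold phase; fun_prop

theorem monotone_phase {q : ℝ} (hq : 0 ≤ q) (n : ℕ) : Monotone (phase q n) := fun x y hxy => by
  unfold phase; gcongr

section Phase

variable {q : ℝ} {n : ℕ}

theorem phase_left (hq : 0 < q) (hn : 1 ≤ n) : phase q n ((π * (n - 1)) ^ 2 / q ^ 2) = 0 := by
  have : (1 : ℝ) ≤ n := by exact_mod_cast hn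
  rw [phase, mul_sqrt_sq_div_sq hq (by nlinarith [pi_pos]), sub_self, zero_div]

theorem phase_right (hq : 0 < q) : phase q n ((π * n) ^ 2 / q ^ 2) = π / 2 := by
  rw [phase, mul_sqrt_sq_div_sq hq (by positivity)]
  ring

theorem mapsTo_phase (hq : 0 < q) (hn : 1 ≤ n) :
    MapsTo (phase q n) (Ioo ((π * (n - 1)) ^ 2 / q ^ 2) ((π * n) ^ 2 / q ^ 2))
      (Ioo 0 (π / 2)) := by
  intro x hx
  have : (1 : ℝ) ≤ n := by exact_mod_cast hn
  obtain ⟨h₁, h₂⟩ := mul_sqrt_mem_Ioo hq (by nlinarith [pi_pos]) (by positivity) hx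
  constructor <;> unfold phase <;> linarith

theorem cot_half_mul_sqrt_eq_neg_tan_phase (hn : Even n) (x : ℝ) :
    cot (q * √x / 2) = -tan (phase q n x) := by
  obtain ⟨m, rfl⟩ := hn
  rw [cot_eq_neg_tan_add_pi_div_two_sub_int_mul _ m, phase]
  push_cast
  ring_nf

end Phase

/-- Root analysis of the equation `λ − c√λ cot(q√λ/2) = μ` on `J_n` for even `n`:
`g` is continuous and strictly increasing on `J_n`, tends to the left endpoint value at the
left endpoint and to `+∞` at the right endpoint; hence for every `μ` above the left endpoint
there is a unique root in `J_n`. (Step 3 of the proof of Theorem 1.1, even case.) -/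
theorem cot_equation_roots_even (q c : ℝ) (hq : 0 < q) (hc : 0 < c) (n : ℕ) (hn : 2 ≤ n)
    (heven : Even n) :
    let L : ℝ := (Real.pi * ((n : ℝ) - 1)) ^ 2 / q ^ 2
    let R : ℝ := (Real.pi * (n : ℝ)) ^ 2 / q ^ 2
    let g : ℝ → ℝ := fun x => x - c * Real.sqrt x * Real.cot (q * Real.sqrt x / 2)
    ContinuousOn g (Ioo L R) ∧ StrictMonoOn g (Ioo L R) ∧
      Tendsto g (𝓝[Ioo L R] L) (𝓝 L) ∧
      Tendsto g (𝓝[Ioo L R] R) atTop ∧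
      ∀ μ : ℝ, L < μ → ∃! x, x ∈ Ioo L R ∧ g x = μ := by
  intro L R g
  have hn₁ : 1 ≤ n := by omega
  have hg : g = fun x => x + c * √x * tan (phase q n x) := by
    funext x
    simp only [g, cot_half_mul_sqrt_eq_neg_tan_phase heven]
    ring
  have hmaps := mapsTo_phase hq hn₁
  have hLR : L < R := by
    have : (1 : ℝ) ≤ n := by exact_mod_cast hn₁
    unfold L R
    gcongr
    linarith
  have hcont := continuousOn_add_mul_tan (c := c) (continuous_phase q n).continuousOn
    (hmaps.mono_right (Ioo_subset_Ioo_left (by linarith [pi_pos])))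
  have hmono := strictMonoOn_add_mul_tan hc.le ((monotone_phase hq.le n).monotoneOn _)
    (hmaps.mono_right Ioo_subset_Ico_self)
  have hleft := (tendsto_add_mul_tan_nhds (c := c) (continuous_phase q n).continuousAt
    (phase_left hq hn₁)).mono_left (nhdsWithin_le_nhds (s := Ioo L R))
  have hright := tendsto_add_mul_tan_atTop (b := R) hc (by positivity)
    (continuous_phase q n).continuousWithinAt (phase_right hq)
    (hmaps.mono_right Ioo_subset_Iio_self)
  rw [hg]
  exact ⟨hcont, hmono, hleft, hright, fun μ hμ =>
    existsUnique_mem_Ioo_eq_of_tendsto hLR hcont hmono hleft hright hμ⟩
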